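/- arXiv:1206.1633 — 2 statements merged into one kernel-verified Lean document; each statement's English description precedes it below -/
import Mathlib

section
/- The set {(x_i, x_j, X_ij) ∈ ℝ³ : l_i ≤ x_i ≤ u_i, l_j ≤ x_j ≤ u_j, X_ij = x_i x_j} is contained in the polytope defined by the four McCormick inequalities together with the box bounds, and moreover every vertex of this polytope lies in the set; hence the polytope is the convex hull of the set. -/
set_option maxHeartbeats 1000000 in
/-- Al-Khayyal–Falk: the McCormick polytope contains the bilinear set, all its
extreme points lie in the set, and it equals the convex hull of the set. -/
theorem mccormick_convex_hull (li ui lj uj : ℝ) (hi : li < ui) (hj : lj < uj) :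
    let S : Set (ℝ × ℝ × ℝ) :=
      {p | li ≤ p.1 ∧ p.1 ≤ ui ∧ lj ≤ p.2.1 ∧ p.2.1 ≤ uj ∧ p.2.2 = p.1 * p.2.1}
    let P : Set (ℝ × ℝ × ℝ) :=
      {p | li ≤ p.1 ∧ p.1 ≤ ui ∧ lj ≤ p.2.1 ∧ p.2.1 ≤ uj ∧
        p.2.2 ≥ li * p.2.1 + lj * p.1 - li * lj ∧
        p.2.2 ≥ ui * p.2.1 + uj * p.1 - ui * uj ∧
        p.2.2 ≤ li * p.2.1 + uj * p.1 - li * uj ∧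
        p.2.2 ≤ ui * p.2.1 + lj * p.1 - ui * lj}
    S ⊆ P ∧ (∀ p ∈ Set.extremePoints ℝ P, p ∈ S) ∧ P = convexHull ℝ S := by
  intro S P
  have hΔi : (0:ℝ) < ui - li := by linarith
  have hΔj : (0:ℝ) < uj - lj := by linarith
  -- the four corners
  set V : Set (ℝ × ℝ × ℝ) :=
    {(li, lj, li*lj), (li, uj, li*uj), (ui, lj, ui*lj), (ui, uj, ui*uj)} with hV
  have hVS : V ⊆ S := by
    rintro p hp
    rcases hp with h | h | h | h <;> subst h <;>
      exact ⟨by linarith, by linarith, by linarith, by linarith, rfl⟩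
  -- S ⊆ P
  have hSP : S ⊆ P := by
    rintro ⟨x, y, z⟩ ⟨h1, h2, h3, h4, h5⟩
    simp only [S, P, Set.mem_setOf_eq] at *
    refine ⟨h1, h2, h3, h4, ?_, ?_, ?_, ?_⟩ <;>
      nlinarith [mul_nonneg (sub_nonneg.2 h1) (sub_nonneg.2 h3),
        mul_nonneg (sub_nonneg.2 h2) (sub_nonneg.2 h4),
        mul_nonneg (sub_nonneg.2 h1) (sub_nonneg.2 h4),
        mul_nonneg (sub_nonneg.2 h2) (sub_nonneg.2 h3)]
  -- P is convex
  have hPconv : Convex ℝ P := by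
    rintro ⟨x1, y1, z1⟩ hp ⟨x2, y2, z2⟩ hq a b ha hb hab
    obtain ⟨p1, p2, p3, p4, p5, p6, p7, p8⟩ := hp
    obtain ⟨q1, q2, q3, q4, q5, q6, q7, q8⟩ := hq
    have hb1 : b = 1 - a := by linarith
    subst hb1
    simp only [P, Set.mem_setOf_eq, Prod.smul_mk, Prod.mk_add_mk, smul_eq_mul] at *
    refine ⟨?_, ?_, ?_, ?_, ?_, ?_, ?_, ?_⟩
    · nlinarith [mul_nonneg ha (sub_nonneg.2 p1), mul_nonneg hb (sub_nonneg.2 q1)]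
    · nlinarith [mul_nonneg ha (sub_nonneg.2 p2), mul_nonneg hb (sub_nonneg.2 q2)]
    · nlinarith [mul_nonneg ha (sub_nonneg.2 p3), mul_nonneg hb (sub_nonneg.2 q3)]
    · nlinarith [mul_nonneg ha (sub_nonneg.2 p4), mul_nonneg hb (sub_nonneg.2 q4)]
    · nlinarith [mul_le_mul_of_nonneg_left p5 ha, mul_le_mul_of_nonneg_left q5 hb]
    · nlinarith [mul_le_mul_of_nonneg_left p6 ha, mul_le_mul_of_nonneg_left q6 hb]
    · nlinarith [mul_le_mul_of_nonneg_left p7 ha, mul_le_mul_of_nonneg_left q7 hb]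
    · nlinarith [mul_le_mul_of_nonneg_left p8 ha, mul_le_mul_of_nonneg_left q8 hb]
  -- P ⊆ convexHull V, via explicit weights
  have hPV : P ⊆ convexHull ℝ V := by
    rintro ⟨x, y, z⟩ ⟨h1, h2, h3, h4, h5, h6, h7, h8⟩
    dsimp only at h1 h2 h3 h4 h5 h6 h7 h8
    set Δ : ℝ := (ui - li) * (uj - lj) with hΔdef
    have hΔ : 0 < Δ := mul_pos hΔi hΔj
    set a : ℝ := (x - li) / (ui - li) with hadef
    set b : ℝ := (y - lj) / (uj - lj) with hbdef
    set c : ℝ := (z - li * y - lj * x + li * lj) / Δ with hcdef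
    have hax : a * (ui - li) = x - li := by rw [hadef]; field_simp
    have hby : b * (uj - lj) = y - lj := by rw [hbdef]; field_simp
    have hcz : c * Δ = z - li * y - lj * x + li * lj := by rw [hcdef]; field_simp
    have haΔ : a * Δ = (x - li) * (uj - lj) := by rw [hΔdef, ← hax]; ring
    have hbΔ : b * Δ = (y - lj) * (ui - li) := by rw [hΔdef, ← hby]; ring
    have hc0 : 0 ≤ c := div_nonneg (by linarith) hΔ.le
    have hca : c ≤ a := by
      have e : (a - c) * Δ = li * y + uj * x - li * uj - z := by
        linear_combination haΔ - hcz
      nlinarith [hΔ, e, h7]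
    have hcb : c ≤ b := by
      have e : (b - c) * Δ = ui * y + lj * x - ui * lj - z := by
        linear_combination hbΔ - hcz
      nlinarith [hΔ, e, h8]
    have hcab : a + b - 1 ≤ c := by
      have e : (c - (a + b - 1)) * Δ = z - ui * y - uj * x + ui * uj := by
        linear_combination hcz - haΔ - hbΔ + hΔdef
      nlinarith [hΔ, e, h6]
    set w : Fin 4 → ℝ := ![1 - a - b + c, b - c, a - c, c] with hw
    set f : Fin 4 → ℝ × ℝ × ℝ :=
      ![(li, lj, li*lj), (li, uj, li*uj), (ui, lj, ui*lj), (ui, uj, ui*uj)] with hf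
    have hsum : ∑ i, w i = 1 := by
      simp [hw, Fin.sum_univ_four]; try ring
    have hwnn : ∀ i ∈ Finset.univ, 0 ≤ w i := by
      intro i _
      fin_cases i <;> simp [hw] <;> linarith
    have hfV : ∀ i ∈ Finset.univ, f i ∈ V := by
      intro i _
      fin_cases i <;> simp [hf, hV]
    have hmem := Finset.centerMass_mem_convexHull (Finset.univ) hwnn (by rw [hsum]; norm_num) hfV
    rwa [Finset.centerMass_eq_of_sum_1 _ _ hsum, show ∑ i, w i • f i = (x, y, z) from ?_] at hmem
    simp only [hw, hf, Fin.sum_univ_four, Matrix.cons_val_zero, Matrix.cons_val_one,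
      Matrix.head_cons, Matrix.cons_val_two, Matrix.cons_val_three, Matrix.tail_cons,
      Prod.smul_mk, smul_eq_mul, Prod.mk_add_mk, Prod.mk.injEq]
    refine ⟨by linear_combination hax, by linear_combination hby,
      by linear_combination lj * hax + li * hby + hcz - c * hΔdef⟩
  -- conclusions
  have hVP : convexHull ℝ V ⊆ P := convexHull_min (fun p hp => hSP (hVS hp)) hPconv
  have hPeqV : P = convexHull ℝ V := le_antisymm hPV hVP
  refine ⟨hSP, ?_, ?_⟩
  · intro p hp
    rw [hPeqV] at hp
    exact hVS (extremePoints_convexHull_subset hp)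
  · refine le_antisymm ?_ (convexHull_min hSP hPconv)
    exact hPV.trans (convexHull_mono hVS)
end

section
/- If w ∈ ℝ^{n+1} satisfies wᵀ X̃* w < 0 for a symmetric matrix X̃*, and S is the support of w, then the principal submatrix X̃*_[S] has a negative eigenvalue, and its eigenvector w̄ corresponding to the most negative eigenvalue, zero-padded to ℝ^{n+1}, gives a cut at least as violated: the padded vector v̄ satisfies v̄ᵀ X̃* v̄ ≤ (wᵀ X̃* w)·(‖w restricted to S‖²)⁻¹·‖w̄‖² when w̄ is unit norm, in particular v̄ᵀ X̃* v̄ < 0. -/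
/-!
Restricting to the support `S` of `w` does not change the quadratic form, so
`wᵀ X̃* w = w_Sᵀ X̃*_[S] w_S`. If every eigenvalue of the symmetric matrix `X̃*_[S]` is at
least `c`, then `X̃*_[S] - c • 1` is positive semidefinite, i.e. the Rayleigh quotient of
`X̃*_[S]` is bounded below by `c`. With `c = 0` this contradicts `wᵀ X̃* w < 0`; with
`c = λ_min`, whose unit eigenvector `w̄` has `v̄ᵀ X̃* v̄ = λ_min`, it is the claimed bound.
-/

open Matrix

section SupportedOn

variable {m R : Type*} [Fintype m] [NonUnitalNonAssocCommSemiring R] {S : Finset m}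

theorem Matrix.dotProduct_comp_subtype_val {x : m → R} (hx : ∀ i ∉ S, x i = 0) (y : m → R) :
    (x ∘ Subtype.val : S → R) ⬝ᵥ (y ∘ Subtype.val) = x ⬝ᵥ y := by
  refine (Finset.sum_coe_sort S fun i => x i * y i).trans (Fintype.sum_subset fun i hxy => ?_)
  by_contra hi
  exact hxy (by rw [hx i hi, zero_mul])

theorem Matrix.mulVec_comp_subtype_val (M : Matrix m m R) {x : m → R}
    (hx : ∀ i ∉ S, x i = 0) :
    ((M *ᵥ x) ∘ Subtype.val : S → R)
      = M.submatrix (Subtype.val : S → m) (Subtype.val : S → m) *ᵥ (x ∘ Subtype.val) := by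
  ext i
  rw [Function.comp_apply, mulVec, mulVec, dotProduct_comm, ← dotProduct_comp_subtype_val hx,
    dotProduct_comm]
  rfl

theorem Matrix.dotProduct_mulVec_submatrix_subtype_val (M : Matrix m m R) {x : m → R}
    (hx : ∀ i ∉ S, x i = 0) :
    (x ∘ Subtype.val : S → R) ⬝ᵥ
        M.submatrix (Subtype.val : S → m) (Subtype.val : S → m) *ᵥ (x ∘ Subtype.val)
      = x ⬝ᵥ M *ᵥ x := by
  rw [← mulVec_comp_subtype_val M hx, dotProduct_comp_subtype_val hx]

end SupportedOn

theorem Matrix.IsHermitian.mul_dotProduct_le_dotProduct_mulVec {m : Type*} [Fintype m]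
    [DecidableEq m] {A : Matrix m m ℝ} (hA : A.IsHermitian) {c : ℝ}
    (hc : ∀ (μ : ℝ) (u : m → ℝ), u ≠ 0 → A *ᵥ u = μ • u → c ≤ μ) (v : m → ℝ) :
    c * (v ⬝ᵥ v) ≤ v ⬝ᵥ A *ᵥ v := by
  have hB : (A - c • 1).IsHermitian := hA.sub (by simp [IsHermitian])
  have hBpsd : (A - c • 1).PosSemidef := by
    refine hB.posSemidef_iff_eigenvalues_nonneg.mpr fun i => ?_
    have hAb : A *ᵥ hB.eigenvectorBasis i = (hB.eigenvalues i + c) • hB.eigenvectorBasis i := by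
      rw [add_smul, ← hB.mulVec_eigenvectorBasis i, sub_mulVec, smul_mulVec, one_mulVec,
        sub_add_cancel]
    have hb : (hB.eigenvectorBasis i : m → ℝ) ≠ 0 :=
      (WithLp.ofLp_eq_zero 2).ne.mpr (hB.eigenvectorBasis.orthonormal.ne_zero i)
    simpa using hc _ _ hb hAb
  have := hBpsd.dotProduct_mulVec_nonneg v
  rwa [star_trivial, sub_mulVec, smul_mulVec, one_mulVec, dotProduct_sub, dotProduct_smul,
    smul_eq_mul, sub_nonneg] at this

/-- SPARSE2 variant: if `wᵀ X̃* w < 0` and `S` is the support of `w`, then the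
principal submatrix `X̃*_[S]` has a negative eigenvalue; moreover, the zero-padded
unit eigenvector `w̄` for its most negative eigenvalue gives a cut at least as
violated: `v̄ᵀ X̃* v̄ ≤ (wᵀ X̃* w)/‖w‖² < 0`. -/
theorem sparse2_eigenvector_cut (n : ℕ)
    (Xs : Matrix (Fin (n + 1)) (Fin (n + 1)) ℝ) (hXs : Xs.IsSymm)
    (w : Fin (n + 1) → ℝ) (hw : w ⬝ᵥ Xs *ᵥ w < 0)
    (S : Finset (Fin (n + 1))) (hS : ∀ i : Fin (n + 1), i ∈ S ↔ w i ≠ 0) :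
    (∃ (mu : ℝ) (u : {i // i ∈ S} → ℝ), u ≠ 0 ∧
        (Xs.submatrix (Subtype.val : {i // i ∈ S} → Fin (n + 1)) Subtype.val) *ᵥ u
          = mu • u ∧ mu < 0) ∧
      ∀ (lmin : ℝ) (wbar : {i // i ∈ S} → ℝ),
        (Xs.submatrix (Subtype.val : {i // i ∈ S} → Fin (n + 1)) Subtype.val) *ᵥ wbar
            = lmin • wbar →
        wbar ⬝ᵥ wbar = 1 →
        (∀ (mu : ℝ) (u : {i // i ∈ S} → ℝ), u ≠ 0 →
          (Xs.submatrix (Subtype.val : {i // i ∈ S} → Fin (n + 1)) Subtype.val) *ᵥ u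
            = mu • u → lmin ≤ mu) →
        ∀ vbar : Fin (n + 1) → ℝ,
          (∀ i : Fin (n + 1), vbar i = if h : i ∈ S then wbar ⟨i, h⟩ else 0) →
          vbar ⬝ᵥ Xs *ᵥ vbar ≤ (w ⬝ᵥ Xs *ᵥ w) / (w ⬝ᵥ w) ∧
            vbar ⬝ᵥ Xs *ᵥ vbar < 0 := by
  set A := Xs.submatrix (Subtype.val : {i // i ∈ S} → Fin (n + 1)) Subtype.val
  have hA : A.IsHermitian := isHermitian_iff_isSymm.mpr (hXs.submatrix _)
  have hw_supp : ∀ i ∉ S, w i = 0 := fun i hi => not_not.mp (mt (hS i).mpr hi)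
  have hquad : (w ∘ Subtype.val) ⬝ᵥ A *ᵥ (w ∘ Subtype.val) = w ⬝ᵥ Xs *ᵥ w :=
    dotProduct_mulVec_submatrix_subtype_val Xs hw_supp
  have hw_ne : w ≠ 0 := by
    rintro rfl
    simp at hw
  have hnorm : 0 < w ⬝ᵥ w := by simpa using dotProduct_star_self_pos_iff.mpr hw_ne
  refine ⟨?_, fun lmin wbar hwbar hunit hmin vbar hvbar => ?_⟩
  · by_contra! hpos
    have := hA.mul_dotProduct_le_dotProduct_mulVec hpos (w ∘ Subtype.val)
    rw [zero_mul, hquad] at this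
    linarith
  have hv_supp : ∀ i ∉ S, vbar i = 0 := fun i hi => by rw [hvbar, dif_neg hi]
  have hv_restrict : vbar ∘ Subtype.val = wbar := funext fun i => by simp [hvbar]
  have hv : vbar ⬝ᵥ Xs *ᵥ vbar = lmin := by
    rw [← dotProduct_mulVec_submatrix_subtype_val Xs hv_supp, hv_restrict, hwbar,
      dotProduct_smul, hunit, smul_eq_mul, mul_one]
  have hray : lmin * (w ⬝ᵥ w) ≤ w ⬝ᵥ Xs *ᵥ w := by
    simpa only [hquad, dotProduct_comp_subtype_val hw_supp] using
      hA.mul_dotProduct_le_dotProduct_mulVec hmin (w ∘ Subtype.val)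
  have hle : lmin ≤ (w ⬝ᵥ Xs *ᵥ w) / (w ⬝ᵥ w) := (le_div_iff₀ hnorm).mpr hray
  exact ⟨hv ▸ hle, hv ▸ hle.trans_lt (div_neg_of_neg_of_pos hw hnorm)⟩
end
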